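/- Let (K,≿) be a coalition formation problem with unrestricted preferences and let V be a top-partition collection. If V is weak effective, then every partition in V is myopically stable; in particular the stable set is nonempty. -/

import Mathlib

/-- A partition of the agent set `N`, encoded by the map sending each agent to her coalition. -/
structure Partn (N : Type*) where
  cell : N → Set N
  mem_cell : ∀ i, i ∈ cell i
  cell_eq : ∀ i j, j ∈ cell i → cell j = cell i

/-- Coalition `C` is formed in partition `π` (i.e. `C ∈ π`). -/
def Partn.HasCoal {N : Type*} (π : Partn N) (C : Set N) : Prop := ∃ i, π.cell i = C

/-- `D(π,π')`: agents placed in different coalitions by `π` and `π'`. -/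
def Partn.diff {N : Type*} (π π' : Partn N) : Set N := {i | π.cell i ≠ π'.cell i}

/-- A coalition formation problem: a set of admissible partitions together with
complete and transitive preferences of each agent over partitions. -/
structure CFP (N : Type*) where
  adm : Set (Partn N)
  pref : N → Partn N → Partn N → Prop
  total : ∀ i, ∀ π ∈ adm, ∀ π' ∈ adm, pref i π π' ∨ pref i π' π
  trans : ∀ i π π' π'', pref i π π' → pref i π' π'' → pref i π π''

namespace CFP
variable {N : Type*}

/-- Strict preference. -/
def spref (P : CFP N) (i : N) (π π' : Partn N) : Prop := P.pref i π π' ∧ ¬ P.pref i π' π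

/-- Unrestricted domain condition: indifference only between partitions leaving
the agent in the same coalition. -/
def NoTies (P : CFP N) : Prop :=
  ∀ i, ∀ π ∈ P.adm, ∀ π' ∈ P.adm, P.pref i π π' → P.pref i π' π → π.cell i = π'.cell i

/-- Order-preserving preferences. -/
def OrderPreserving (P : CFP N) : Prop :=
  P.NoTies ∧
  ∀ i, ∀ π ∈ P.adm, ∀ π' ∈ P.adm, ∀ τ ∈ P.adm, ∀ τ' ∈ P.adm,
    π.cell i ≠ π'.cell i → P.spref i π π' →
    τ.cell i = π.cell i → τ'.cell i = π'.cell i → P.spref i τ τ'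

/-- `π` is myopically blocked by coalition `C` via `π'`. -/
def Blocks (P : CFP N) (C : Set N) (π π' : Partn N) : Prop :=
  π ∈ P.adm ∧ π' ∈ P.adm ∧ C.Nonempty ∧
  (∀ i ∈ C, P.pref i π' π) ∧
  (∃ j ∈ C, P.spref j π' π) ∧
  (∀ j, j ∉ C → (π.cell j ∩ C).Nonempty → π'.cell j = {j}) ∧
  (∀ j, π.cell j ∩ C = ∅ → π'.cell j = π.cell j)

/-- The (myopic) core. -/
def Core (P : CFP N) : Set (Partn N) :=
  {π | π ∈ P.adm ∧ ¬ ∃ C π', P.Blocks C π π'}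

/-- The set of (myopically) stable partitions. -/
def StableSet (P : CFP N) : Set (Partn N) :=
  {π | π ∈ P.adm ∧ ¬ ∃ C π', P.Blocks C π π' ∧ π'.HasCoal C}

/-- `V` is a top-partition collection: it consists exactly of the `|V|`-best
partitions of every agent, i.e. every agent strictly prefers every member of `V`
to every admissible partition outside `V`. -/
def TopCollection (P : CFP N) (V : Set (Partn N)) : Prop :=
  V.Nonempty ∧ V ⊆ P.adm ∧
  ∀ i, ∀ π ∈ V, ∀ π' ∈ P.adm, π' ∉ V → P.spref i π π'

/-- Effectiveness of a top-partition collection. -/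
def Effective (P : CFP N) (V : Set (Partn N)) : Prop :=
  ∀ π ∈ V, ∀ π' ∈ V, π ≠ π' →
    ∃ S : Set N, S.Nonempty ∧ S ⊆ π.diff π' ∧ π.HasCoal S ∧ ∀ i ∈ S, P.spref i π π'

/-- Weak effectiveness of a top-partition collection. -/
def WeakEffective (P : CFP N) (V : Set (Partn N)) : Prop :=
  ∀ π ∈ V, ∀ π' ∈ V, π ≠ π' → ∀ C : Set N,
    π'.HasCoal C →
    (∀ i ∈ C, π'.cell i = C) →
    (∀ i, i ∉ C →
      (π.cell i ∩ C = ∅ → π'.cell i = π.cell i) ∧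
      ((π.cell i ∩ C).Nonempty → π'.cell i = {i})) →
    ∃ j ∈ C, P.spref j π π'

/-- Domination: `π'` dominates `π` iff some coalition formed in `π'` blocks `π` via `π'`. -/
def Dom (P : CFP N) (π' π : Partn N) : Prop :=
  ∃ C, P.Blocks C π π' ∧ π'.HasCoal C

/-- Absorbing set for the myopic domination relation. -/
def Absorbing (P : CFP N) (A : Set (Partn N)) : Prop :=
  A.Nonempty ∧ A ⊆ P.adm ∧
  ∀ π ∈ A, ∀ π' ∈ P.adm, π' ≠ π → (Relation.TransGen P.Dom π' π ↔ π' ∈ A)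

/-- Weak-myopic blocking (condition (iii) of myopic blocking is dropped). -/
def WeakBlocks (P : CFP N) (C : Set N) (π π' : Partn N) : Prop :=
  π ∈ P.adm ∧ π' ∈ P.adm ∧ C.Nonempty ∧
  (∀ i ∈ C, P.pref i π' π) ∧
  (∃ j ∈ C, P.spref j π' π) ∧
  (∀ j, π.cell j ∩ C = ∅ → π'.cell j = π.cell j)

/-- The weak myopic core. -/
def WeakCore (P : CFP N) : Set (Partn N) :=
  {π | π ∈ P.adm ∧ ¬ ∃ C π', P.WeakBlocks C π π'}

/-- `Q` is the problem without externalities induced by the order-preserving problem `P`. -/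
def Induces (P Q : CFP N) : Prop :=
  Q.adm = P.adm ∧
  ∀ i, ∀ π ∈ P.adm, ∀ π' ∈ P.adm,
    (π.cell i = π'.cell i → Q.pref i π π' ∧ Q.pref i π' π) ∧
    (π.cell i ≠ π'.cell i → (P.spref i π π' ↔ Q.spref i π π'))

/-- Prudent blocking: every member of `C` compares `π` with her *worst* partition
placing her in `π'`'s coalition (equivalently, with all such partitions). -/
def PrudentBlocks (P : CFP N) (C : Set N) (π π' : Partn N) : Prop :=
  π ∈ P.adm ∧ π' ∈ P.adm ∧ C.Nonempty ∧
  (∀ i ∈ C, ∀ τ ∈ P.adm, τ.cell i = π'.cell i → P.pref i τ π) ∧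
  (∃ j ∈ C, ∀ τ ∈ P.adm, τ.cell j = π'.cell j → P.spref j τ π)

/-- Optimistic blocking: every member of `C` compares `π` with her *best* partition
placing her in `π'`'s coalition (equivalently, with some such partition). -/
def OptBlocks (P : CFP N) (C : Set N) (π π' : Partn N) : Prop :=
  π ∈ P.adm ∧ π' ∈ P.adm ∧ C.Nonempty ∧
  (∀ i ∈ C, ∃ τ ∈ P.adm, τ.cell i = π'.cell i ∧ P.pref i τ π) ∧
  (∃ j ∈ C, ∃ τ ∈ P.adm, τ.cell j = π'.cell j ∧ P.spref j τ π)

def PrudentDom (P : CFP N) (π' π : Partn N) : Prop :=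
  ∃ C, P.PrudentBlocks C π π' ∧ π'.HasCoal C

def OptDom (P : CFP N) (π' π : Partn N) : Prop :=
  ∃ C, P.OptBlocks C π π' ∧ π'.HasCoal C

def PrudentAbsorbing (P : CFP N) (A : Set (Partn N)) : Prop :=
  A.Nonempty ∧ A ⊆ P.adm ∧
  ∀ π ∈ A, ∀ π' ∈ P.adm, π' ≠ π → (Relation.TransGen P.PrudentDom π' π ↔ π' ∈ A)

def OptAbsorbing (P : CFP N) (A : Set (Partn N)) : Prop :=
  A.Nonempty ∧ A ⊆ P.adm ∧
  ∀ π ∈ A, ∀ π' ∈ P.adm, π' ≠ π → (Relation.TransGen P.OptDom π' π ↔ π' ∈ A)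

end CFP

/-!
A blocking coalition `C` of `π ∈ V` via `π'` contains an agent who strictly prefers `π'` to `π`;
since every agent ranks all of `V` strictly above everything outside it, `π'` lies in `V`. The
deviation from `π` to `π'` then has exactly the shape weak effectiveness speaks about, which yields
a member of `C` strictly preferring `π` to `π'`, contradicting that all of `C` weakly prefer `π'`.
-/

namespace Partn

variable {N : Type*}

theorem cell_eq_of_hasCoal {π : Partn N} {C : Set N} (hC : π.HasCoal C) {i : N} (hi : i ∈ C) :
    π.cell i = C := by
  obtain ⟨i₀, rfl⟩ := hC
  exact π.cell_eq i₀ i hi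

end Partn

namespace CFP

variable {N : Type*} {P : CFP N} {V : Set (Partn N)} {C : Set N} {π π' : Partn N}

theorem Blocks.ne (h : P.Blocks C π π') : π ≠ π' := by
  rintro rfl
  obtain ⟨j, -, hj⟩ := h.2.2.2.2.1
  exact hj.2 hj.1

theorem Blocks.mem_of_topCollection (hV : P.TopCollection V) (hπ : π ∈ V)
    (h : P.Blocks C π π') : π' ∈ V := by
  by_contra hπ'
  obtain ⟨j, -, hj⟩ := h.2.2.2.2.1
  exact (hV.2.2 j π hπ π' h.2.1 hπ').2 hj.1

theorem WeakEffective.not_blocks (hwe : P.WeakEffective V) (hπ : π ∈ V) (hπ' : π' ∈ V)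
    (h : P.Blocks C π π') (hC : π'.HasCoal C) : False := by
  have hne := h.ne
  obtain ⟨-, -, -, hpref, -, habandoned, huntouched⟩ := h
  obtain ⟨k, hk, hks⟩ := hwe π hπ π' hπ' hne C hC (fun _ => Partn.cell_eq_of_hasCoal hC)
    fun i hi => ⟨huntouched i, habandoned i hi⟩
  exact hks.2 (hpref k hk)

theorem WeakEffective.subset_stableSet (hV : P.TopCollection V) (hwe : P.WeakEffective V) :
    V ⊆ P.StableSet := by
  rintro π hπ
  refine ⟨hV.2.1 hπ, ?_⟩
  rintro ⟨C, π', h, hC⟩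
  exact hwe.not_blocks hπ (h.mem_of_topCollection hV hπ) h hC

end CFP

theorem weak_effective_subset_stable_general {N : Type*} (P : CFP N)
    (V : Set (Partn N)) (hV : P.TopCollection V) (hwe : P.WeakEffective V) :
    V ⊆ P.StableSet ∧ P.StableSet.Nonempty :=
  have hsub := hwe.subset_stableSet hV
  ⟨hsub, hV.1.mono hsub⟩

/-- a weak effective top-partition collection is contained in the
stable set; in particular the stable set is nonempty. -/
theorem weak_effective_subset_stable {N : Type*} (P : CFP N) (hP : P.NoTies)
    (V : Set (Partn N)) (hV : P.TopCollection V) (hwe : P.WeakEffective V) :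
    V ⊆ P.StableSet ∧ P.StableSet.Nonempty :=
  weak_effective_subset_stable_general P V hV hwe
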